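/- arXiv:2006.11759 — 4 statements merged into one kernel-verified Lean document; each statement's English description precedes it below -/
import Mathlib

section
/- Let d ≥ 1 and fix w₁,…,w_d > 0. For each j = 1,…,d let G_j : [0,1] × [0,1] → [0,1] be a function with G_j(1,v) = 1 for all v ∈ [0,1], such that the partial derivative g_j(u,v) = ∂G_j(u,v)/∂u exists and is jointly continuous on [0,1] × [0,1]. Then lim_{u→0⁺} (1/u) ∫₀¹ [1 − min_{1≤j≤d} G_j(1 − u·w_j, v)] dv = ∫₀¹ max_{1≤j≤d} { w_j · g_j(1,v) } dv. -/
/-!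
Because `G j 1 v = 1`, the integrand `(1/u) (1 - min_j G j (1 - u w_j) v)` is the maximum over `j`
of the difference quotients `(G j 1 v - G j (1 - u w_j) v) / u`. Each quotient tends to
`w_j g j 1 v` and, by the mean value theorem, is bounded by `w_j sup |g j|`, so dominated
convergence applies. Measurability in `v` comes from `G j 1 v - G j a v = ∫ t in a..1, g j t v`,
which is continuous in `v`.
-/

open MeasureTheory Filter Set Topology Function

theorem Filter.Tendsto.ciSup_nhds {ι α L : Type*} [Finite ι] [Nonempty ι]
    [ConditionallyCompleteLattice L] [TopologicalSpace L] [ContinuousSup L]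
    {f : ι → α → L} {g : ι → L} {l : Filter α} (h : ∀ i, Tendsto (f i) l (𝓝 (g i))) :
    Tendsto (fun x => ⨆ i, f i x) l (𝓝 (⨆ i, g i)) := by
  have := Fintype.ofFinite ι
  simpa only [Finset.sup'_univ_eq_ciSup] using
    Tendsto.finset_sup'_nhds_apply Finset.univ_nonempty fun i _ => h i

theorem abs_ciSup_le {ι : Type*} [Finite ι] [Nonempty ι] {f : ι → ℝ} {M : ℝ}
    (h : ∀ i, |f i| ≤ M) : |⨆ i, f i| ≤ M :=
  abs_le.2 ⟨(neg_le_of_abs_le (h (Classical.arbitrary ι))).trans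
    (le_ciSup (Finite.bddAbove_range f) _), ciSup_le fun i => le_of_abs_le (h i)⟩

theorem mul_sub_ciInf {ι : Type*} [Finite ι] [Nonempty ι] {c : ℝ} (hc : 0 ≤ c) (x : ℝ)
    (f : ι → ℝ) : c * (x - ⨅ i, f i) = ⨆ i, c * (x - f i) :=
  Antitone.map_ciInf_of_continuousAt (f := fun y => c * (x - y)) (by fun_prop)
    (fun _ _ h => mul_le_mul_of_nonneg_left (sub_le_sub_left h x) hc)
    (Finite.bddBelow_range f)

theorem integral_eq_sub_of_hasDerivWithinAt_Icc {E : Type*} [NormedAddCommGroup E]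
    [NormedSpace ℝ E] [CompleteSpace E] {f f' : ℝ → E} {a b : ℝ} (hab : a ≤ b)
    (hf : ∀ x ∈ Icc a b, HasDerivWithinAt f (f' x) (Icc a b) x)
    (hf' : ContinuousOn f' (Icc a b)) :
    ∫ x in a..b, f' x = f b - f a :=
  intervalIntegral.integral_eq_sub_of_hasDerivAt_of_le hab
    (fun x hx => (hf x hx).continuousWithinAt)
    (fun x hx => (hf x (Ioo_subset_Icc_self hx)).hasDerivAt (Icc_mem_nhds hx.1 hx.2))
    (hf'.intervalIntegrable_of_Icc hab)

theorem tendsto_sub_mul_nhdsLT {x w : ℝ} (hw : 0 < w) :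
    Tendsto (fun u => x - u * w) (𝓝[>] 0) (𝓝[<] x) := by
  refine tendsto_nhdsWithin_of_tendsto_nhds_of_eventually_within _ ?_ ?_
  · exact ((by fun_prop : Continuous fun u : ℝ => x - u * w).tendsto' 0 x (by simp)).mono_left
      nhdsWithin_le_nhds
  · filter_upwards [self_mem_nhdsWithin] with u (hu : 0 < u)
    simpa using mul_pos hu hw

theorem tendsto_inv_mul_sub_sub_mul {f : ℝ → ℝ} {f' x w : ℝ}
    (hf : HasDerivWithinAt f f' (Iic x) x) (hw : 0 < w) :
    Tendsto (fun u => u⁻¹ * (f x - f (x - u * w))) (𝓝[>] 0) (𝓝 (w * f')) := by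
  have hslope : Tendsto (slope f x) (𝓝[<] x) (𝓝 f') := by
    simpa only [Iic_sdiff_right] using hasDerivWithinAt_iff_tendsto_slope.1 hf
  refine ((hslope.comp (tendsto_sub_mul_nhdsLT hw)).const_mul w).congr' ?_
  filter_upwards [self_mem_nhdsWithin] with u (hu : 0 < u)
  simp only [comp_apply, slope_def_field]
  field_simp
  ring

section Rectangle

variable {G g : ℝ → ℝ → ℝ} {a b c d : ℝ}

theorem continuousOn_intervalIntegral_of_continuousOn_prod {s t : ℝ} (hab : a ≤ b)
    (hcd : c ≤ d) (hg : ContinuousOn (uncurry g) (Icc a b ×ˢ Icc c d)) (hs : s ∈ Icc a b)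
    (ht : t ∈ Icc a b) :
    ContinuousOn (fun v => ∫ u in s..t, g u v) (Icc c d) := by
  have hext : Continuous (uncurry fun v u => g (projIcc a b hab u) (projIcc c d hcd v)) :=
    hg.comp_continuous
      (f := fun p : ℝ × ℝ => ((projIcc a b hab p.2 : ℝ), (projIcc c d hcd p.1 : ℝ)))
      (by fun_prop) fun p => ⟨(projIcc a b hab p.2).2, (projIcc c d hcd p.1).2⟩
  refine (intervalIntegral.continuous_parametric_intervalIntegral_of_continuous' hext s t)
    |>.continuousOn.congr fun v hv => intervalIntegral.integral_congr fun u hu => ?_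
  simp [projIcc_of_mem hab (uIcc_subset_Icc hs ht hu), projIcc_of_mem hcd hv]

variable
  (hderiv : ∀ u ∈ Icc a b, ∀ v ∈ Icc c d, HasDerivWithinAt (G · v) (g u v) (Icc a b) u)
include hderiv

theorem tendsto_inv_mul_sub_of_hasDerivWithinAt (hab : a < b) {w : ℝ} (hw : 0 < w) {v : ℝ}
    (hv : v ∈ Icc c d) :
    Tendsto (fun u => u⁻¹ * (G b v - G (b - u * w) v)) (𝓝[>] 0) (𝓝 (w * g b v)) :=
  tendsto_inv_mul_sub_sub_mul ((hderiv b (right_mem_Icc.2 hab.le) v hv).mono_of_mem_nhdsWithin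
    (Icc_mem_nhdsLE hab)) hw

variable (hg : ContinuousOn (uncurry g) (Icc a b ×ˢ Icc c d))
include hg

theorem continuousOn_sub_of_hasDerivWithinAt (hcd : c ≤ d) {s : ℝ} (hs : s ∈ Icc a b) :
    ContinuousOn (fun v => G b v - G s v) (Icc c d) := by
  have hsb : Icc s b ⊆ Icc a b := Icc_subset_Icc_left hs.1
  refine (continuousOn_intervalIntegral_of_continuousOn_prod (hs.1.trans hs.2) hcd hg hs
    (right_mem_Icc.2 (hs.1.trans hs.2))).congr fun v hv => ?_
  refine (integral_eq_sub_of_hasDerivWithinAt_Icc hs.2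
    (fun u hu => (hderiv u (hsb hu) v hv).mono hsb) ?_).symm
  exact hg.comp (f := fun u => (u, v)) (by fun_prop) fun u hu => ⟨hsb hu, hv⟩

theorem exists_abs_sub_le_mul :
    ∃ C, ∀ s ∈ Icc a b, ∀ v ∈ Icc c d, |G b v - G s v| ≤ C * (b - s) := by
  obtain ⟨C, hC⟩ := (isCompact_Icc.prod isCompact_Icc).exists_bound_of_continuousOn hg
  refine ⟨C, fun s hs v hv => ?_⟩
  have := (convex_Icc a b).norm_image_sub_le_of_norm_hasDerivWithin_le (f := (G · v))
    (fun u hu => hderiv u hu v hv) (fun u hu => hC (u, v) ⟨hu, hv⟩) hs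
    (right_mem_Icc.2 (hs.1.trans hs.2))
  simpa [Real.norm_eq_abs, abs_of_nonneg (sub_nonneg.2 hs.2)] using this

theorem exists_eventually_abs_inv_mul_sub_le (hab : a < b) {w : ℝ} (hw : 0 < w) :
    ∃ C, ∀ᶠ u in 𝓝[>] 0, ∀ v ∈ Icc c d,
      |u⁻¹ * (G b v - G (b - u * w) v)| ≤ C := by
  obtain ⟨C, hC⟩ := exists_abs_sub_le_mul hderiv hg
  refine ⟨C * w, ?_⟩
  filter_upwards [self_mem_nhdsWithin, (tendsto_sub_mul_nhdsLT hw).eventually (Ico_mem_nhdsLT hab)]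
    with u (hu : 0 < u) hmem v hv
  have hdiff := hC _ (Ico_subset_Icc_self hmem) v hv
  rw [sub_sub_cancel] at hdiff
  calc |u⁻¹ * (G b v - G (b - u * w) v)| = u⁻¹ * |G b v - G (b - u * w) v| := by
        rw [abs_mul, abs_inv, abs_of_pos hu]
    _ ≤ u⁻¹ * (C * (u * w)) := by gcongr
    _ = C * w := by field_simp

theorem eventually_continuousOn_inv_mul_sub (hab : a < b) (hcd : c ≤ d) {w : ℝ} (hw : 0 < w) :
    ∀ᶠ u in 𝓝[>] 0, ContinuousOn (fun v => u⁻¹ * (G b v - G (b - u * w) v)) (Icc c d) :=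
  ((tendsto_sub_mul_nhdsLT hw).eventually (Ico_mem_nhdsLT hab)).mono fun _ hmem =>
    continuousOn_const.mul
      (continuousOn_sub_of_hasDerivWithinAt hderiv hg hcd (Ico_subset_Icc_self hmem))

end Rectangle

theorem stmt0_general (d : ℕ) (hd : 0 < d) (w : Fin d → ℝ) (hw : ∀ j, 0 < w j)
    (G g : Fin d → ℝ → ℝ → ℝ)
    (hG1 : ∀ j, ∀ v ∈ Set.Icc (0:ℝ) 1, G j 1 v = 1)
    (hderiv : ∀ j, ∀ u ∈ Set.Icc (0:ℝ) 1, ∀ v ∈ Set.Icc (0:ℝ) 1,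
      HasDerivWithinAt (fun u' => G j u' v) (g j u v) (Set.Icc (0:ℝ) 1) u)
    (hcont : ∀ j, ContinuousOn (fun p : ℝ × ℝ => g j p.1 p.2)
      (Set.Icc (0:ℝ) 1 ×ˢ Set.Icc (0:ℝ) 1)) :
    Filter.Tendsto
      (fun u : ℝ => (1 / u) * ∫ v in (0:ℝ)..1, (1 - ⨅ j, G j (1 - u * w j) v))
      (nhdsWithin 0 (Set.Ioi 0))
      (nhds (∫ v in (0:ℝ)..1, ⨆ j, w j * g j 1 v)) := by
  have : Nonempty (Fin d) := ⟨⟨0, hd⟩⟩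
  set Q : Fin d → ℝ → ℝ → ℝ := fun j u v => u⁻¹ * (G j 1 v - G j (1 - u * w j) v)
  have hQ : ∀ᶠ u in 𝓝[>] (0:ℝ), ∀ v ∈ Ioc (0:ℝ) 1,
      1 / u * (1 - ⨅ j, G j (1 - u * w j) v) = ⨆ j, Q j u v := by
    filter_upwards [self_mem_nhdsWithin] with u (hu : 0 < u) v hv
    rw [one_div, mul_sub_ciInf (inv_nonneg.2 hu.le)]
    exact iSup_congr fun j => by simp only [Q, hG1 j v (Ioc_subset_Icc_self hv)]
  choose C hC using fun j =>
    exists_eventually_abs_inv_mul_sub_le (hderiv j) (hcont j) one_pos (hw j)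
  obtain ⟨M, hM⟩ := Finite.exists_le C
  simp only [← intervalIntegral.integral_const_mul]
  refine intervalIntegral.tendsto_integral_filter_of_dominated_convergence (fun _ => M)
    ?_ ?_ intervalIntegrable_const ?_ <;> simp only [uIoc_of_le zero_le_one]
  · filter_upwards [hQ, eventually_all.2 fun j =>
      eventually_continuousOn_inv_mul_sub (hderiv j) (hcont j) one_pos zero_le_one (hw j)]
      with u hu hQcont
    have hsup : ContinuousOn (fun v => ⨆ j, Q j u v) (Icc 0 1) := fun v hv =>
      Tendsto.ciSup_nhds fun j => hQcont j v hv
    exact ((hsup.mono Ioc_subset_Icc_self).aestronglyMeasurable measurableSet_Ioc).congr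
      (ae_restrict_of_forall_mem measurableSet_Ioc fun v hv => (hu v hv).symm)
  · filter_upwards [hQ, eventually_all.2 hC] with u hu hCu
    refine ae_of_all _ fun v hv => ?_
    rw [hu v hv, Real.norm_eq_abs]
    exact abs_ciSup_le fun j => (hCu j v (Ioc_subset_Icc_self hv)).trans (hM j)
  · refine ae_of_all _ fun v hv => ?_
    refine (Tendsto.ciSup_nhds fun j => ?_).congr' (hQ.mono fun u hu => (hu v hv).symm)
    exact tendsto_inv_mul_sub_of_hasDerivWithinAt (hderiv j) one_pos (hw j)
      (Ioc_subset_Icc_self hv)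

/-- Proposition 5 (analytic content): with comonotonic residual dependence, the
stable tail dependence function of the conditional normal copula is
`ℓ(w) = ∫₀¹ max_j w_j g_j(1,v) dv`. -/
theorem stmt0 (d : ℕ) (hd : 0 < d) (w : Fin d → ℝ) (hw : ∀ j, 0 < w j)
    (G g : Fin d → ℝ → ℝ → ℝ)
    (hrange : ∀ j, ∀ u ∈ Set.Icc (0:ℝ) 1, ∀ v ∈ Set.Icc (0:ℝ) 1,
      G j u v ∈ Set.Icc (0:ℝ) 1)
    (hG1 : ∀ j, ∀ v ∈ Set.Icc (0:ℝ) 1, G j 1 v = 1)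
    (hderiv : ∀ j, ∀ u ∈ Set.Icc (0:ℝ) 1, ∀ v ∈ Set.Icc (0:ℝ) 1,
      HasDerivWithinAt (fun u' => G j u' v) (g j u v) (Set.Icc (0:ℝ) 1) u)
    (hcont : ∀ j, ContinuousOn (fun p : ℝ × ℝ => g j p.1 p.2)
      (Set.Icc (0:ℝ) 1 ×ˢ Set.Icc (0:ℝ) 1)) :
    Filter.Tendsto
      (fun u : ℝ => (1 / u) * ∫ v in (0:ℝ)..1, (1 - ⨅ j, G j (1 - u * w j) v))
      (nhdsWithin 0 (Set.Ioi 0))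
      (nhds (∫ v in (0:ℝ)..1, ⨆ j, w j * g j 1 v)) :=
  stmt0_general d hd w hw G g hG1 hderiv hcont
end

section
/- Let Φ denote the standard normal CDF and Φ⁻¹ its inverse on (0,1). For every u ∈ (0,1), define D(u,δ) = 2∫₀^u Φ(δ·Φ⁻¹(v)/√(2−δ²)) dv for δ ∈ [0,1]. Then for each fixed u ∈ (0,1), as δ → 0⁺ one has D(u,δ) = u − (δ/√π)·φ(Φ⁻¹(u)) + O(δ³); that is, there exist constants C > 0 and δ₀ ∈ (0,1) such that |D(u,δ) − u + (δ/√π)·φ(Φ⁻¹(u))| ≤ C·δ³ for all δ ∈ (0,δ₀). -/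
/-!
Substituting `v = Φ x` turns `D(Φ b, δ)` into `2 ∫_{x < b} φ(x) Φ(a x) dx` with
`a = δ / √(2 - δ²)`. Replacing `Φ(a x)` by its tangent line `1/2 + φ(0) a x` costs at most
`|a x|³`, which integrates against `φ` to `O(a³)`, and `∫_{x < b} x φ(x) dx = -φ(b)`; hence
`D = Φ(b) - 2 a φ(0) φ(b) + O(δ³)`. Finally
`2 a φ(0) = δ/√π · √2/√(2 - δ²) = δ/√π + O(δ³)`.
-/

open MeasureTheory Filter Set

/-- The standard normal density. -/
noncomputable def stdPdf (t : ℝ) : ℝ := Real.exp (-(t ^ 2) / 2) / Real.sqrt (2 * Real.pi)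

/-- The standard normal cumulative distribution function. -/
noncomputable def stdCdf (x : ℝ) : ℝ := ∫ t in Set.Iic x, stdPdf t

/-- The inverse of the standard normal CDF on (0,1). -/
noncomputable def stdQuantile : ℝ → ℝ := Function.invFun stdCdf

/-- The diagonal of the bivariate Gaussian copula `C_N(u,u;ρ)` with `ρ = 1 - δ²`. -/
noncomputable def gaussDiag (u δ : ℝ) : ℝ :=
  2 * ∫ v in (0:ℝ)..u, stdCdf (δ * stdQuantile v / Real.sqrt (2 - δ ^ 2))

open ProbabilityTheory

lemma stdPdf_eq_gaussianPDFReal : stdPdf = gaussianPDFReal 0 1 := by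
  ext t
  simp [stdPdf, gaussianPDFReal_def, div_eq_inv_mul]

lemma stdPdf_pos (t : ℝ) : 0 < stdPdf t := by
  rw [stdPdf_eq_gaussianPDFReal]; exact gaussianPDFReal_pos _ _ _ one_ne_zero

lemma integrable_stdPdf : Integrable stdPdf := by
  rw [stdPdf_eq_gaussianPDFReal]; exact integrable_gaussianPDFReal _ _

lemma integral_stdPdf : ∫ t, stdPdf t = 1 := by
  rw [stdPdf_eq_gaussianPDFReal]; exact integral_gaussianPDFReal_eq_one _ one_ne_zero

lemma stdCdf_eq_cdf : stdCdf = cdf (gaussianReal 0 1) := by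
  ext x
  rw [cdf_eq_real, measureReal_def, gaussianReal_apply_eq_integral _ one_ne_zero,
    ENNReal.toReal_ofReal (integral_nonneg fun t => gaussianPDFReal_nonneg _ _ t), stdCdf,
    stdPdf_eq_gaussianPDFReal]

lemma continuous_stdPdf : Continuous stdPdf := by
  unfold stdPdf; fun_prop

lemma stdPdf_neg (t : ℝ) : stdPdf (-t) = stdPdf t := by simp [stdPdf]

lemma stdPdf_hasDerivAt (x : ℝ) : HasDerivAt stdPdf (-x * stdPdf x) x := by
  have h : HasDerivAt (fun t : ℝ => -t ^ 2 / 2) (-x) x := by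
    simpa [neg_div] using ((hasDerivAt_pow 2 x).div_const 2).fun_neg
  refine (h.exp.div_const (Real.sqrt (2 * Real.pi))).congr_deriv ?_
  rw [stdPdf]; ring

lemma stdCdf_sub (x y : ℝ) : stdCdf y - stdCdf x = ∫ t in x..y, stdPdf t :=
  intervalIntegral.integral_Iic_sub_Iic integrable_stdPdf.integrableOn
    integrable_stdPdf.integrableOn

lemma stdCdf_hasDerivAt (x : ℝ) : HasDerivAt stdCdf (stdPdf x) x := by
  have h := (intervalIntegral.integral_hasDerivAt_right (a := 0) (b := x)
    integrable_stdPdf.intervalIntegrable (continuous_stdPdf.stronglyMeasurableAtFilter _ _)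
    continuous_stdPdf.continuousAt).const_add (stdCdf 0)
  refine h.congr_of_eventuallyEq (Eventually.of_forall fun y => ?_)
  simp only [← stdCdf_sub]; ring

lemma continuous_stdCdf : Continuous stdCdf :=
  continuous_iff_continuousAt.mpr fun x => (stdCdf_hasDerivAt x).continuousAt

lemma stdCdf_strictMono : StrictMono stdCdf :=
  strictMono_of_hasDerivAt_pos stdCdf_hasDerivAt stdPdf_pos

lemma stdCdf_pos (x : ℝ) : 0 < stdCdf x := by
  have := stdCdf_eq_cdf ▸ cdf_nonneg (gaussianReal 0 1) (x - 1)
  linarith [stdCdf_strictMono (sub_one_lt x)]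

lemma stdCdf_lt_one (x : ℝ) : stdCdf x < 1 := by
  have := stdCdf_eq_cdf ▸ cdf_le_one (gaussianReal 0 1) (x + 1)
  linarith [stdCdf_strictMono (lt_add_one x)]

lemma Ioo_subset_range_stdCdf : Ioo 0 1 ⊆ range stdCdf := by
  intro u ⟨hu0, hu1⟩
  obtain ⟨a, ha⟩ := ((stdCdf_eq_cdf ▸ tendsto_cdf_atBot _).eventually_lt_const hu0).exists
  obtain ⟨b, hb⟩ := ((stdCdf_eq_cdf ▸ tendsto_cdf_atTop _).eventually_const_lt hu1).exists
  exact intermediate_value_univ a b continuous_stdCdf ⟨ha.le, hb.le⟩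

lemma stdQuantile_stdCdf (x : ℝ) : stdQuantile (stdCdf x) = x :=
  Function.leftInverse_invFun stdCdf_strictMono.injective x

lemma stdCdf_image_Iio (b : ℝ) : stdCdf '' Iio b = Ioo 0 (stdCdf b) := by
  ext v
  constructor
  · rintro ⟨x, hx, rfl⟩
    exact ⟨stdCdf_pos x, stdCdf_strictMono hx⟩
  · rintro ⟨hv0, hvb⟩
    obtain ⟨x, rfl⟩ := Ioo_subset_range_stdCdf ⟨hv0, hvb.trans (stdCdf_lt_one b)⟩
    exact ⟨x, stdCdf_strictMono.lt_iff_lt.mp hvb, rfl⟩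

lemma stdCdf_zero : stdCdf 0 = 1 / 2 := by
  have hsymm : ∫ t in Ioi (0:ℝ), stdPdf t = stdCdf 0 := by
    simpa [stdPdf_neg, stdCdf] using (integral_comp_neg_Iic 0 stdPdf).symm
  have htotal : stdCdf 0 + ∫ t in Ioi (0:ℝ), stdPdf t = 1 := by
    rw [← integral_stdPdf, ← compl_Iic]
    exact integral_add_compl measurableSet_Iic integrable_stdPdf
  linarith

lemma abs_stdPdf_sub_stdPdf_zero_le (t : ℝ) : |stdPdf t - stdPdf 0| ≤ t ^ 2 / 2 := by
  have hs : 1 ≤ Real.sqrt (2 * Real.pi) :=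
    Real.one_le_sqrt.mpr (by nlinarith [Real.pi_gt_three])
  have hexp_le : Real.exp (-(t ^ 2) / 2) ≤ 1 := Real.exp_le_one_iff.mpr (by nlinarith)
  have hexp_ge : 1 - t ^ 2 / 2 ≤ Real.exp (-(t ^ 2) / 2) := by
    linarith [Real.add_one_le_exp (-(t ^ 2) / 2)]
  rw [stdPdf, stdPdf, ← sub_div, abs_div, abs_of_nonneg (Real.sqrt_nonneg (2 * Real.pi))]
  refine (div_le_self (abs_nonneg _) hs).trans ?_
  rw [abs_le]; constructor <;> norm_num <;> linarith

lemma abs_stdCdf_sub_linear_le (x : ℝ) : |stdCdf x - 1 / 2 - stdPdf 0 * x| ≤ |x| ^ 3 := by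
  have hint : stdCdf x - 1 / 2 - stdPdf 0 * x = ∫ t in (0:ℝ)..x, (stdPdf t - stdPdf 0) := by
    rw [intervalIntegral.integral_sub integrable_stdPdf.intervalIntegrable
      intervalIntegrable_const, ← stdCdf_sub, stdCdf_zero]
    simp; ring
  have hbound : ∀ t ∈ uIoc 0 x, ‖stdPdf t - stdPdf 0‖ ≤ x ^ 2 / 2 := by
    intro t ht
    have ht2 : t ^ 2 ≤ x ^ 2 := by
      rcases mem_uIoc.mp ht with h | h <;> nlinarith [h.1, h.2]
    exact (abs_stdPdf_sub_stdPdf_zero_le t).trans (by linarith)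
  rw [hint]
  calc |∫ t in (0:ℝ)..x, (stdPdf t - stdPdf 0)| ≤ x ^ 2 / 2 * |x - 0| :=
        intervalIntegral.norm_integral_le_of_norm_le_const hbound
    _ ≤ |x| ^ 3 := by
        rw [sub_zero, ← sq_abs]; nlinarith [abs_nonneg x]

lemma integrable_pow_mul_stdPdf (n : ℕ) : Integrable fun x => x ^ n * stdPdf x := by
  have h := (integrable_rpow_mul_exp_neg_mul_sq (b := 1 / 2) (by norm_num) (s := n)
    (by linarith [n.cast_nonneg (α := ℝ)])).div_const (Real.sqrt (2 * Real.pi))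
  refine h.congr (Eventually.of_forall fun x => ?_)
  simp only [Real.rpow_natCast, stdPdf]; ring_nf

lemma integrable_abs_pow_mul_stdPdf (n : ℕ) : Integrable fun x => |x| ^ n * stdPdf x := by
  refine (integrable_pow_mul_stdPdf n).abs.congr (Eventually.of_forall fun x => ?_)
  simp [abs_mul, abs_of_pos (stdPdf_pos x)]

lemma integrable_mul_stdPdf : Integrable fun x => x * stdPdf x := by
  simpa using integrable_pow_mul_stdPdf 1

lemma tendsto_stdPdf_atBot : Tendsto stdPdf atBot (nhds 0) := by
  have htop : Tendsto stdPdf atTop (nhds 0) := by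
    have := (Real.tendsto_exp_neg_atTop_nhds_zero.comp
      ((tendsto_pow_atTop two_ne_zero).atTop_div_const two_pos)).div_const
        (Real.sqrt (2 * Real.pi))
    rw [zero_div] at this
    refine this.congr fun t => ?_
    simp only [Function.comp_apply, stdPdf]; ring_nf
  simpa [Function.comp_def, stdPdf_neg] using htop.comp tendsto_neg_atBot_atTop

lemma integral_Iio_mul_stdPdf (b : ℝ) : ∫ x in Iio b, x * stdPdf x = -stdPdf b := by
  have hderiv : ∀ x ∈ Iic b, HasDerivAt (fun y => -stdPdf y) (x * stdPdf x) x :=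
    fun x _ => (stdPdf_hasDerivAt x).neg.congr_deriv (by ring)
  rw [← integral_Iic_eq_integral_Iio, integral_Iic_of_hasDerivAt_of_tendsto' hderiv
    integrable_mul_stdPdf.integrableOn
    (by simpa using tendsto_stdPdf_atBot.neg)]
  ring

lemma integral_zero_stdCdf_eq_setIntegral_Iio (b : ℝ) (g : ℝ → ℝ) :
    ∫ v in 0..stdCdf b, g v = ∫ x in Iio b, stdPdf x * g (stdCdf x) := by
  rw [intervalIntegral.integral_of_le (stdCdf_pos b).le, integral_Ioc_eq_integral_Ioo,
    ← stdCdf_image_Iio, integral_image_eq_integral_abs_deriv_smul measurableSet_Iio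
      (fun x _ => (stdCdf_hasDerivAt x).hasDerivWithinAt) stdCdf_strictMono.injective.injOn]
  simp_rw [abs_of_pos (stdPdf_pos _), smul_eq_mul]

lemma gaussDiag_stdCdf (b δ : ℝ) :
    gaussDiag (stdCdf b) δ =
      2 * ∫ x in Iio b, stdPdf x * stdCdf (δ / Real.sqrt (2 - δ ^ 2) * x) := by
  rw [gaussDiag, integral_zero_stdCdf_eq_setIntegral_Iio]
  simp_rw [stdQuantile_stdCdf, mul_div_right_comm]

lemma abs_setIntegral_Iio_stdPdf_mul_stdCdf_mul_sub_le (a b : ℝ) :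
    |(∫ x in Iio b, stdPdf x * stdCdf (a * x)) - (stdCdf b / 2 - a * stdPdf 0 * stdPdf b)| ≤
      |a| ^ 3 * ∫ x, |x| ^ 3 * stdPdf x := by
  have hmain : Integrable fun x => stdPdf x * stdCdf (a * x) := by
    refine integrable_stdPdf.mono'
      (continuous_stdPdf.mul (continuous_stdCdf.comp (by fun_prop))).aestronglyMeasurable
      (Eventually.of_forall fun x => ?_)
    rw [Real.norm_eq_abs, abs_of_pos (mul_pos (stdPdf_pos x) (stdCdf_pos _))]
    exact mul_le_of_le_one_right (stdPdf_pos x).le (stdCdf_lt_one _).le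
  have hlin : Integrable fun x => stdPdf x / 2 + a * stdPdf 0 * (x * stdPdf x) :=
    (integrable_stdPdf.div_const 2).add (integrable_mul_stdPdf.const_mul _)
  have hcube := integrable_abs_pow_mul_stdPdf 3
  have hlinear : ∫ x in Iio b, (stdPdf x / 2 + a * stdPdf 0 * (x * stdPdf x)) =
      stdCdf b / 2 - a * stdPdf 0 * stdPdf b := by
    rw [integral_add (integrable_stdPdf.div_const 2).integrableOn
      (integrable_mul_stdPdf.integrableOn.const_mul _), integral_div, integral_const_mul,
      integral_Iio_mul_stdPdf, ← integral_Iic_eq_integral_Iio]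
    rw [stdCdf]; ring
  have hremainder :
      (∫ x in Iio b, stdPdf x * stdCdf (a * x)) - (stdCdf b / 2 - a * stdPdf 0 * stdPdf b) =
        ∫ x in Iio b, stdPdf x * (stdCdf (a * x) - 1 / 2 - stdPdf 0 * (a * x)) := by
    rw [← hlinear, ← integral_sub hmain.integrableOn hlin.integrableOn]
    congr 1; ext x; ring
  have hbound : ∀ x, ‖stdPdf x * (stdCdf (a * x) - 1 / 2 - stdPdf 0 * (a * x))‖ ≤
      |a| ^ 3 * (|x| ^ 3 * stdPdf x) := by
    intro x
    rw [Real.norm_eq_abs, abs_mul, abs_of_pos (stdPdf_pos x)]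
    calc stdPdf x * |stdCdf (a * x) - 1 / 2 - stdPdf 0 * (a * x)| ≤ stdPdf x * |a * x| ^ 3 :=
          mul_le_mul_of_nonneg_left (abs_stdCdf_sub_linear_le _) (stdPdf_pos x).le
      _ = |a| ^ 3 * (|x| ^ 3 * stdPdf x) := by rw [abs_mul]; ring
  rw [hremainder, ← integral_const_mul]
  refine (norm_integral_le_of_norm_le (hcube.const_mul _).integrableOn
    (ae_of_all _ hbound)).trans (setIntegral_le_integral (hcube.const_mul _) (ae_of_all _ ?_))
  intro x
  have := stdPdf_pos x
  positivity

lemma abs_div_sqrt_pi_sub_two_mul_stdPdf_zero_le {δ : ℝ} (hδ0 : 0 ≤ δ) (hδ1 : δ ≤ 1) :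
    |δ / Real.sqrt Real.pi - 2 * (δ / Real.sqrt (2 - δ ^ 2)) * stdPdf 0| ≤ δ ^ 3 := by
  set p := Real.sqrt Real.pi
  set r := Real.sqrt 2
  set s := Real.sqrt (2 - δ ^ 2)
  have hp : 1 ≤ p := Real.one_le_sqrt.mpr (by linarith [Real.pi_gt_three])
  have hr : r ^ 2 = 2 := Real.sq_sqrt (by norm_num)
  have hs : s ^ 2 = 2 - δ ^ 2 := Real.sq_sqrt (by nlinarith)
  have hs1 : 1 ≤ s := Real.one_le_sqrt.mpr (by nlinarith)
  have hrs : s ≤ r := Real.sqrt_le_sqrt (by nlinarith)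
  have hr0 : 0 < r := by positivity
  have hφ0 : stdPdf 0 = 1 / (r * p) := by
    simp [stdPdf, r, p, Real.sqrt_mul (show (0:ℝ) ≤ 2 by norm_num)]
  have hrewrite : δ / p - 2 * (δ / s) * stdPdf 0 = -(δ * (r - s) / (p * s)) := by
    rw [hφ0]; field_simp; linear_combination δ * hr
  rw [hrewrite, abs_neg, abs_of_nonneg (by positivity), div_le_iff₀ (by positivity)]
  nlinarith [mul_le_mul_of_nonneg_left (mul_le_mul hp hs1 zero_le_one (by linarith))
    (pow_nonneg hδ0 3), mul_nonneg hδ0 (sub_nonneg.mpr hrs)]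

/-- Lemma 1 of the paper: for fixed `u ∈ (0,1)`, as `δ → 0⁺`,
`D(u,δ) = u - (δ/√π) φ(Φ⁻¹(u)) + O(δ³)`. -/
theorem stmt1 (u : ℝ) (hu : u ∈ Set.Ioo (0:ℝ) 1) :
    ∃ C > (0:ℝ), ∃ δ₀ ∈ Set.Ioo (0:ℝ) 1, ∀ δ ∈ Set.Ioo (0:ℝ) δ₀,
      |gaussDiag u δ - u + (δ / Real.sqrt Real.pi) * stdPdf (stdQuantile u)| ≤ C * δ ^ 3 := by
  obtain ⟨b, rfl⟩ := Ioo_subset_range_stdCdf hu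
  set M := ∫ x, |x| ^ 3 * stdPdf x
  have hM : 0 ≤ M := integral_nonneg fun x => mul_nonneg (by positivity) (stdPdf_pos x).le
  refine ⟨2 * M + stdPdf b + 1, by linarith [stdPdf_pos b], 1 / 2, by norm_num,
    fun δ ⟨hδ0, hδ1⟩ => ?_⟩
  set a := δ / Real.sqrt (2 - δ ^ 2)
  have ha : |a| ^ 3 ≤ δ ^ 3 := by
    have hs : 1 ≤ Real.sqrt (2 - δ ^ 2) := Real.one_le_sqrt.mpr (by nlinarith)
    rw [abs_of_nonneg (by positivity)]
    exact pow_le_pow_left₀ (by positivity) (div_le_self hδ0.le hs) 3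
  have hI := abs_setIntegral_Iio_stdPdf_mul_stdCdf_mul_sub_le a b
  have hcoef := abs_div_sqrt_pi_sub_two_mul_stdPdf_zero_le hδ0.le (by linarith)
  rw [stdQuantile_stdCdf, gaussDiag_stdCdf]
  set I := ∫ x in Iio b, stdPdf x * stdCdf (a * x)
  calc |2 * I - stdCdf b + δ / Real.sqrt Real.pi * stdPdf b|
      = |2 * (I - (stdCdf b / 2 - a * stdPdf 0 * stdPdf b))
          + (δ / Real.sqrt Real.pi - 2 * a * stdPdf 0) * stdPdf b| := by ring_nf
    _ ≤ 2 * (|a| ^ 3 * M) + δ ^ 3 * stdPdf b := by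
        refine (abs_add_le _ _).trans ?_
        rw [abs_mul, abs_mul, abs_two, abs_of_pos (stdPdf_pos b)]
        gcongr
        exact (stdPdf_pos b).le
    _ ≤ (2 * M + stdPdf b + 1) * δ ^ 3 := by
        nlinarith [mul_le_mul_of_nonneg_right ha hM, pow_pos hδ0 3]
end

section
/- Fix θ > 1 and define, for u, v ∈ (0,1), the conditional Gumbel copula C_{1|2}(u|v) = exp(−(x^θ + y^θ)^{1/θ}) · (x^θ + y^θ)^{1/θ − 1} · y^{θ−1} / v, where x = −ln u and y = −ln v. Then for all w, w₀ > 0: lim_{u→0⁺} [1 − C_{1|2}(1 − u·w | 1 − u·w₀)] = 1 − (1 + (w/w₀)^θ)^{(1−θ)/θ}. -/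
/-!
Write `x = -log(1 - u w)` and `y = -log(1 - u w₀)`. The factor
`(x^θ + y^θ)^{1/θ - 1} y^{θ - 1}` is homogeneous of degree `0` in `(x, y)`, so it equals
`((x/y)^θ + 1)^{1/θ - 1}`. As `u → 0⁺` both `x` and `y` tend to `0`, which sends the exponential
factor and the denominator `1 - u w₀` to `1`, while `x/y → w/w₀` because `x ∼ u w` and `y ∼ u w₀`.
-/

open Filter Topology Real

/-- `C_{1|2}(u|v) = gumbelCondLog θ (-log u) (-log v) / v`. -/
noncomputable def gumbelCondLog (θ x y : ℝ) : ℝ :=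
  exp (-(x ^ θ + y ^ θ) ^ (1 / θ)) * (x ^ θ + y ^ θ) ^ (1 / θ - 1) * y ^ (θ - 1)

lemma rpow_add_rpow_mul_rpow_sub_one {θ x y : ℝ} (hθ : θ ≠ 0) (hx : 0 ≤ x) (hy : 0 < y) :
    (x ^ θ + y ^ θ) ^ (1 / θ - 1) * y ^ (θ - 1) = ((x / y) ^ θ + 1) ^ (1 / θ - 1) := by
  have hyθ : 0 < y ^ θ := rpow_pos_of_pos hy θ
  have hratio : (x / y) ^ θ + 1 = (x ^ θ + y ^ θ) / y ^ θ := by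
    rw [div_rpow hx hy.le]
    field_simp
  have hexp : θ * (1 / θ - 1) = -(θ - 1) := by field_simp; ring
  rw [hratio, div_rpow (by positivity) hyθ.le, ← rpow_mul hy.le, hexp, rpow_neg hy.le,
    div_inv_eq_mul]

lemma tendsto_gumbelCondLog {α : Type*} {l : Filter α} {θ r : ℝ} {x y : α → ℝ} (hθ : 0 < θ)
    (hx : Tendsto x l (𝓝 0)) (hy : Tendsto y l (𝓝 0))
    (hx_nonneg : ∀ᶠ a in l, 0 ≤ x a) (hy_pos : ∀ᶠ a in l, 0 < y a) (hr : 0 ≤ r)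
    (hxy : Tendsto (fun a => x a / y a) l (𝓝 r)) :
    Tendsto (fun a => gumbelCondLog θ (x a) (y a)) l (𝓝 ((r ^ θ + 1) ^ (1 / θ - 1))) := by
  have hsum : Tendsto (fun a => x a ^ θ + y a ^ θ) l (𝓝 0) := by
    simpa [zero_rpow hθ.ne'] using
      (hx.rpow_const (Or.inr hθ.le)).add (hy.rpow_const (Or.inr hθ.le))
  have hexp : Tendsto (fun a => exp (-(x a ^ θ + y a ^ θ) ^ (1 / θ))) l (𝓝 1) := by
    have hroot := hsum.rpow_const (Or.inr (one_div_pos.2 hθ).le)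
    rw [zero_rpow (one_div_pos.2 hθ).ne'] at hroot
    exact tendsto_exp_nhds_zero_nhds_one.comp (by simpa using hroot.neg)
  have hbase : (0 : ℝ) < r ^ θ + 1 := by positivity
  have hhom : Tendsto (fun a => (((x a / y a) ^ θ + 1) ^ (1 / θ - 1))) l
      (𝓝 ((r ^ θ + 1) ^ (1 / θ - 1))) :=
    ((hxy.rpow_const (Or.inr hθ.le)).add_const 1).rpow_const (Or.inl hbase.ne')
  refine (one_mul ((r ^ θ + 1) ^ (1 / θ - 1)) ▸ hexp.mul hhom).congr' ?_
  filter_upwards [hx_nonneg, hy_pos] with a hxa hya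
  rw [gumbelCondLog, mul_assoc, rpow_add_rpow_mul_rpow_sub_one hθ.ne' hxa hya]

lemma tendsto_neg_log_one_sub_mul (c : ℝ) :
    Tendsto (fun u : ℝ => -log (1 - u * c)) (𝓝 0) (𝓝 0) := by
  have hcont : ContinuousAt (fun u : ℝ => -log (1 - u * c)) 0 :=
    ((continuousAt_log (by norm_num)).comp (by fun_prop)).neg
  simpa using hcont.tendsto

lemma tendsto_neg_log_one_sub_mul_div (c : ℝ) :
    Tendsto (fun u : ℝ => -log (1 - u * c) / u) (𝓝[≠] 0) (𝓝 c) := by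
  have hderiv : HasDerivAt (fun u : ℝ => -log (1 - u * c)) c 0 := by
    have hlin : HasDerivAt (fun u : ℝ => 1 - u * c) (-c) 0 := by
      simpa using ((hasDerivAt_id (0 : ℝ)).mul_const c).const_sub 1
    simpa using (hlin.log (by norm_num)).fun_neg
  refine (hasDerivAt_iff_tendsto_slope.mp hderiv).congr' ?_
  filter_upwards [self_mem_nhdsWithin] with u hu
  simp [slope, div_eq_inv_mul]

lemma eventually_pos_neg_log_one_sub_mul {c : ℝ} (hc : 0 < c) :
    ∀ᶠ u in 𝓝[>] 0, 0 < -log (1 - u * c) := by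
  have hpos : ∀ᶠ u in 𝓝[>] (0 : ℝ), 0 < 1 - u * c := by
    have hcont : Tendsto (fun u : ℝ => 1 - u * c) (𝓝 0) (𝓝 1) := by
      simpa using (by fun_prop : Continuous fun u : ℝ => 1 - u * c).tendsto 0
    exact (hcont.mono_left nhdsWithin_le_nhds).eventually (lt_mem_nhds one_pos)
  filter_upwards [hpos, self_mem_nhdsWithin] with u hu hu0
  exact neg_pos.2 (log_neg hu (sub_lt_self 1 (mul_pos hu0 hc)))

/-- Upper tail function of the Gumbel linking copula (Appendix E): with the conditional
Gumbel copula `C_{1|2}(u|v) = exp(-(x^θ+y^θ)^{1/θ}) (x^θ+y^θ)^{1/θ-1} y^{θ-1} / v`,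
`x = -ln u`, `y = -ln v`, one has
`lim_{u→0⁺} [1 - C_{1|2}(1-uw | 1-uw₀)] = 1 - (1 + (w/w₀)^θ)^{(1-θ)/θ}`. -/
theorem stmt15 (θ : ℝ) (hθ : 1 < θ) (w w₀ : ℝ) (hw : 0 < w) (hw₀ : 0 < w₀) :
    Filter.Tendsto
      (fun u : ℝ =>
        1 - Real.exp (-((-Real.log (1 - u * w)) ^ θ + (-Real.log (1 - u * w₀)) ^ θ) ^ (1/θ)) *
              ((-Real.log (1 - u * w)) ^ θ + (-Real.log (1 - u * w₀)) ^ θ) ^ (1/θ - 1) *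
              (-Real.log (1 - u * w₀)) ^ (θ - 1) / (1 - u * w₀))
      (nhdsWithin 0 (Set.Ioi 0))
      (nhds (1 - (1 + (w / w₀) ^ θ) ^ ((1 - θ) / θ))) := by
  have hθ₀ : 0 < θ := zero_lt_one.trans hθ
  have hright : 𝓝[>] (0 : ℝ) ≤ 𝓝[≠] 0 := nhdsWithin_mono _ fun _ hu => ne_of_gt hu
  have hratio : Tendsto (fun u : ℝ => -log (1 - u * w) / -log (1 - u * w₀)) (𝓝[>] 0)
      (𝓝 (w / w₀)) := by
    refine (((tendsto_neg_log_one_sub_mul_div w).div (tendsto_neg_log_one_sub_mul_div w₀)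
      hw₀.ne').mono_left hright).congr' ?_
    filter_upwards [self_mem_nhdsWithin] with u hu
    exact div_div_div_cancel_right₀ (ne_of_gt hu) _ _
  have hcopula := tendsto_gumbelCondLog hθ₀
    ((tendsto_neg_log_one_sub_mul w).mono_left nhdsWithin_le_nhds)
    ((tendsto_neg_log_one_sub_mul w₀).mono_left nhdsWithin_le_nhds)
    ((eventually_pos_neg_log_one_sub_mul hw).mono fun _ h => h.le)
    (eventually_pos_neg_log_one_sub_mul hw₀) (div_pos hw hw₀).le hratio
  have hden : Tendsto (fun u : ℝ => 1 - u * w₀) (𝓝[>] 0) (𝓝 1) := by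
    simpa using ((by fun_prop : Continuous fun u : ℝ => 1 - u * w₀).tendsto 0).mono_left
      nhdsWithin_le_nhds
  have hlimit : ((w / w₀) ^ θ + 1) ^ (1 / θ - 1) = (1 + (w / w₀) ^ θ) ^ ((1 - θ) / θ) := by
    rw [add_comm]
    congr 1
    field_simp
  have hquotient := (hcopula.div hden one_ne_zero).const_sub 1
  rw [div_one, hlimit] at hquotient
  exact hquotient
end

section
/- Fix θ_j > θ_k > 0 and set ϑ = (θ_j + 1)/(θ_j − θ_k) (so ϑ > 1). Then ∫₀¹ max( (θ_j + 1)·v^{θ_j}, (θ_k + 1)·v^{θ_k} ) dv = 1 + (ϑ − 1)^{ϑ−1} / ϑ^{ϑ}. -/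
open MeasureTheory Set

/-!
The two densities `(t + 1) v ^ t` each integrate to `1` over `[0, 1]`, and the one with the
larger exponent dominates exactly to the right of the crossing point
`c = r ^ (θⱼ - θₖ)⁻¹`, `r = (θₖ + 1) / (θⱼ + 1)`. Hence the integral of the maximum is
`1 + c ^ (θₖ + 1) - c ^ (θⱼ + 1)`. In terms of `ϑ` one has `r = (ϑ - 1) / ϑ` and these powers
of `c` are `r ^ (ϑ - 1)` and `r ^ ϑ`, whose difference `r ^ (ϑ - 1) (1 - r) = r ^ (ϑ - 1) / ϑ`
is `(ϑ - 1) ^ (ϑ - 1) / ϑ ^ ϑ`.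
-/

theorem intervalIntegral.integral_max_eq_of_crossing {f g : ℝ → ℝ} {a b c : ℝ}
    (hac : a ≤ c) (hcb : c ≤ b) (hf : IntervalIntegrable f volume a b)
    (hg : IntervalIntegrable g volume a b) (hfg : ∀ x ∈ Ioc a c, f x ≤ g x)
    (hgf : ∀ x ∈ Ioc c b, g x ≤ f x) :
    ∫ x in a..b, max (f x) (g x) = (∫ x in a..c, g x) + ∫ x in c..b, f x := by
  have hmax : IntervalIntegrable (fun x => max (f x) (g x)) volume a b :=
    ⟨hf.1.sup hg.1, hf.2.sup hg.2⟩
  have hc : c ∈ uIcc a b := mem_uIcc_of_le hac hcb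
  rw [← intervalIntegral.integral_add_adjacent_intervals
    (hmax.mono_set (uIcc_subset_uIcc_left hc)) (hmax.mono_set (uIcc_subset_uIcc_right hc))]
  congr 1 <;> refine intervalIntegral.integral_congr_ae (ae_of_all _ fun x hx => ?_)
  · exact max_eq_right (hfg x (uIoc_of_le hac ▸ hx))
  · exact max_eq_left (hgf x (uIoc_of_le hcb ▸ hx))

theorem intervalIntegrable_add_one_mul_rpow {t : ℝ} (ht : -1 < t) (a b : ℝ) :
    IntervalIntegrable (fun x => (t + 1) * x ^ t) volume a b :=
  (intervalIntegral.intervalIntegrable_rpow' ht).const_mul _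

theorem integral_add_one_mul_rpow {t : ℝ} (ht : -1 < t) (a b : ℝ) :
    ∫ x in a..b, (t + 1) * x ^ t = b ^ (t + 1) - a ^ (t + 1) := by
  rw [intervalIntegral.integral_const_mul, integral_rpow (.inl ht)]
  field_simp [(by linarith : t + 1 ≠ 0)]

theorem add_one_mul_rpow_le_iff {a b v : ℝ} (ha : -1 < a) (hab : a < b) (hv : 0 < v) :
    (b + 1) * v ^ b ≤ (a + 1) * v ^ a ↔ v ≤ ((a + 1) / (b + 1)) ^ (b - a)⁻¹ := by
  have hb : 0 < b + 1 := by linarith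
  have hsplit : (b + 1) * v ^ b = v ^ (b - a) * (b + 1) * v ^ a := by
    rw [mul_comm (v ^ (b - a)), mul_assoc, ← Real.rpow_add hv, sub_add_cancel]
  rw [Real.le_rpow_inv_iff_of_pos hv.le (div_nonneg (by linarith) hb.le) (by linarith),
    le_div_iff₀ hb, hsplit, mul_le_mul_iff_of_pos_right (Real.rpow_pos_of_pos hv a)]

theorem rpow_sub_one_sub_rpow_of_ratio {ϑ : ℝ} (hϑ : 1 ≤ ϑ) :
    ((ϑ - 1) / ϑ) ^ (ϑ - 1) - ((ϑ - 1) / ϑ) ^ ϑ = (ϑ - 1) ^ (ϑ - 1) / ϑ ^ ϑ := by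
  have hϑ0 : 0 < ϑ := by linarith
  have hpow : ((ϑ - 1) / ϑ) ^ ϑ = ((ϑ - 1) / ϑ) ^ (ϑ - 1) * ((ϑ - 1) / ϑ) := by
    simpa using Real.rpow_add_one' (div_nonneg (by linarith) hϑ0.le) (y := ϑ - 1)
      (by simpa using hϑ0.ne')
  rw [hpow, Real.div_rpow (by linarith) hϑ0.le, Real.rpow_sub_one hϑ0.ne' ϑ]
  field_simp
  ring

theorem integral_max_add_one_mul_rpow {a b : ℝ} (ha : -1 < a) (hab : a < b) :
    ∫ v in (0:ℝ)..1, max ((b + 1) * v ^ b) ((a + 1) * v ^ a) =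
      1 + ((a + 1) / (b + 1)) ^ ((a + 1) / (b - a)) - ((a + 1) / (b + 1)) ^ ((b + 1) / (b - a)) := by
  have hb : -1 < b := ha.trans hab
  have hr0 : 0 ≤ (a + 1) / (b + 1) := div_nonneg (by linarith) (by linarith)
  set c := ((a + 1) / (b + 1)) ^ (b - a)⁻¹
  have hc0 : 0 ≤ c := Real.rpow_nonneg hr0 _
  have hc1 : c ≤ 1 := Real.rpow_le_one hr0 ((div_le_one (by linarith)).2 (by linarith))
    (inv_nonneg.2 (by linarith))
  have hc_rpow (s : ℝ) : c ^ s = ((a + 1) / (b + 1)) ^ (s / (b - a)) := by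
    rw [← Real.rpow_mul hr0, inv_mul_eq_div]
  rw [intervalIntegral.integral_max_eq_of_crossing hc0 hc1
      (intervalIntegrable_add_one_mul_rpow hb 0 1) (intervalIntegrable_add_one_mul_rpow ha 0 1)
      (fun v hv => (add_one_mul_rpow_le_iff ha hab hv.1).2 hv.2)
      (fun v hv => (not_le.1 ((add_one_mul_rpow_le_iff ha hab (hc0.trans_lt hv.1)).not.2
        (not_le.2 hv.1))).le),
    integral_add_one_mul_rpow ha, integral_add_one_mul_rpow hb, hc_rpow, hc_rpow,
    Real.zero_rpow (by linarith), Real.one_rpow]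
  ring

/-- Appendix F of the paper: for Clayton linking copulas with parameters `θⱼ > θₖ > 0`,
`∫₀¹ max((θⱼ+1)v^{θⱼ}, (θₖ+1)v^{θₖ}) dv = 1 + (ϑ-1)^{ϑ-1}/ϑ^ϑ` with
`ϑ = (θⱼ+1)/(θⱼ-θₖ)`. -/
theorem stmt18 (θj θk : ℝ) (hθk : 0 < θk) (hjk : θk < θj) :
    (∫ v in (0:ℝ)..1, max ((θj + 1) * v ^ θj) ((θk + 1) * v ^ θk)) =
      1 + ((θj + 1) / (θj - θk) - 1) ^ ((θj + 1) / (θj - θk) - 1) /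
        ((θj + 1) / (θj - θk)) ^ ((θj + 1) / (θj - θk)) := by
  have hd : 0 < θj - θk := by linarith
  rw [integral_max_add_one_mul_rpow (by linarith) hjk]
  set ϑ := (θj + 1) / (θj - θk) with hϑ_def
  have hϑ_sub_one : ϑ - 1 = (θk + 1) / (θj - θk) := by
    rw [hϑ_def]; field_simp; ring
  have hratio : (θk + 1) / (θj + 1) = (ϑ - 1) / ϑ := by
    rw [hϑ_sub_one, hϑ_def]; field_simp
  rw [hratio, ← hϑ_sub_one, ← rpow_sub_one_sub_rpow_of_ratio ((one_le_div hd).2 (by linarith))]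
  ring
end
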